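/- arXiv:2102.04398 — 2 statements merged into one kernel-verified Lean document; each statement's English description precedes it below -/
import Mathlib

section
/- Let a, b ∈ ℝ⁺ and let χ_a, χ_b: ℝ⁺ → ℝ be continuous kernels with supp χ_a ⊆ [e^{−a}, e^{a}] and supp χ_b ⊆ [e^{−b}, e^{b}]. For a fixed α ∈ ℝ define χ: ℝ⁺ → ℝ by χ(u) := (1 − α)·χ_a(u·e^{−a−1}) + α·χ_b(u·e^{b}). Then χ is also a kernel (satisfies conditions (i), (ii) and (iii)), and moreover χ(u) = 0 for every u ∈ [1, e), and for every integer k: ∫₁^∞ χ(u)·u^{2kπi} du/u = 0 when k ≠ 0 and = 1 − α when k = 0. -/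
set_option maxHeartbeats 1000000


open Real MeasureTheory Filter Set Topology
open scoped ENNReal

lemma vanish_outside {f : ℝ → ℝ} {p q : ℝ} (hp : 0 < p)
    (hc : ContinuousOn f (Ioi 0)) (hs : Function.support f ⊆ Icc p q) :
    ∀ x, 0 < x → x ∉ Ioo p q → f x = 0 := by
  have hzero : ∀ x, x ∉ Icc p q → f x = 0 := by
    intro x hx
    by_contra h
    exact hx (hs h)
  have hleft : f p = 0 := by
    have hca : ContinuousAt f p := hc.continuousAt (Ioi_mem_nhds hp)
    have h1 : Tendsto f (𝓝[<] p) (𝓝 (f p)) := hca.continuousWithinAt.tendsto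
    have h2 : Tendsto f (𝓝[<] p) (𝓝 0) := by
      apply Tendsto.congr' _ tendsto_const_nhds
      filter_upwards [self_mem_nhdsWithin] with y hy
      exact (hzero y (fun hy' => absurd hy'.1 (not_le.2 hy))).symm
    exact tendsto_nhds_unique h1 h2
  have hright : f q = 0 := by
    by_cases hq : 0 < q
    · have hca : ContinuousAt f q := hc.continuousAt (Ioi_mem_nhds hq)
      have h1 : Tendsto f (𝓝[>] q) (𝓝 (f q)) := hca.continuousWithinAt.tendsto
      have h2 : Tendsto f (𝓝[>] q) (𝓝 0) := by
        apply Tendsto.congr' _ tendsto_const_nhds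
        filter_upwards [self_mem_nhdsWithin] with y hy
        exact (hzero y (fun hy' => absurd hy'.2 (not_le.2 hy))).symm
      exact tendsto_nhds_unique h1 h2
    · exact hzero q (fun hy' => hq (lt_of_lt_of_le hp hy'.1))
  intro x hx hxo
  by_cases hxi : x ∈ Icc p q
  · rcases eq_or_lt_of_le hxi.1 with h1 | h1
    · rw [← h1]; exact hleft
    · rcases eq_or_lt_of_le hxi.2 with h2 | h2
      · rw [h2]; exact hright
      · exact absurd ⟨h1, h2⟩ hxo
  · exact hzero x hxi

lemma global_bound {f : ℝ → ℝ} {p q : ℝ} (hp : 0 < p)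
    (hc : ContinuousOn f (Ioi 0)) (hs : Function.support f ⊆ Icc p q) :
    ∃ C, 0 ≤ C ∧ ∀ x, 0 < x → |f x| ≤ C := by
  obtain ⟨C, hC⟩ := isCompact_Icc.exists_bound_of_continuousOn
    (hc.mono (fun x hx => lt_of_lt_of_le hp hx.1))
  refine ⟨max C 0, le_max_right _ _, fun x hx => ?_⟩
  by_cases hxi : x ∈ Icc p q
  · exact le_trans (hC x hxi) (le_max_left _ _)
  · have : f x = 0 := by
      by_contra h; exact hxi (hs h)
    simp [this]

lemma integrable_of_support {f : ℝ → ℝ} {p q : ℝ} (hp : 0 < p)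
    (hc : ContinuousOn f (Ioi 0)) (hs : Function.support f ⊆ Icc p q) :
    IntegrableOn f (Ioi 0) := by
  have h1 : IntegrableOn f (Icc p q) :=
    (hc.mono (fun x hx => lt_of_lt_of_le hp hx.1)).integrableOn_Icc
  have h2 : Integrable ((Icc p q).indicator f) :=
    h1.integrable_indicator measurableSet_Icc
  rw [Set.indicator_eq_self.2 hs] at h2
  exact h2.integrableOn

lemma support_scale {f : ℝ → ℝ} {p q c : ℝ} (hc : 0 < c)
    (hs : Function.support f ⊆ Icc p q) :
    Function.support (fun u => f (u * c)) ⊆ Icc (p / c) (q / c) := by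
  intro u hu
  have h := hs hu
  exact ⟨(div_le_iff₀ hc).2 h.1, (le_div_iff₀ hc).2 h.2⟩

lemma cont_scale {f : ℝ → ℝ} {c : ℝ} (hc : 0 < c) (h : ContinuousOn f (Ioi 0)) :
    ContinuousOn (fun u => f (u * c)) (Ioi 0) :=
  h.comp (continuous_id.mul continuous_const).continuousOn
    (fun _ hx => mul_pos hx hc)

lemma fourier_unit {a : ℝ} {χa : ℝ → ℝ}
    (hpart : ∀ u : ℝ, 0 < u → HasSum (fun k : ℤ => χa (Real.exp (-(k : ℝ)) * u)) 1)
    (hca : ContinuousOn χa (Ioi 0))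
    (hsa : Function.support χa ⊆ Icc (Real.exp (-a)) (Real.exp a))
    (k : ℤ) {N : ℕ} (hN : a + 1 ≤ N) :
    (∫ s in (-(N:ℝ))..(N:ℝ), (χa (Real.exp s) : ℂ)
        * Complex.exp ((2 * (k:ℂ) * (Real.pi:ℂ) * Complex.I) * (s:ℂ)))
      = if k = 0 then 1 else 0 := by
  set c : ℂ := 2 * (k:ℂ) * (Real.pi:ℂ) * Complex.I with hc
  have hvan : ∀ s : ℝ, s ∉ Icc (-a) a → χa (Real.exp s) = 0 := by
    intro s hs
    by_contra h
    have h2 := hsa h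
    exact hs ⟨exp_le_exp.1 h2.1, exp_le_exp.1 h2.2⟩
  set f : ℝ → ℂ := fun s => (χa (Real.exp s) : ℂ) * Complex.exp (c * (s:ℂ)) with hf
  have hcont : Continuous f := by
    apply Continuous.mul
    · exact Complex.continuous_ofReal.comp
        (hca.comp_continuous continuous_exp (fun x => exp_pos x))
    · exact Complex.continuous_exp.comp (by continuity)
  have hexp1 : ∀ d : ℤ, Complex.exp (c * ((d:ℝ):ℂ)) = 1 := by
    intro d
    have h : c * ((d:ℝ):ℂ) = ((k * d : ℤ) : ℂ) * (2 * (Real.pi:ℂ) * Complex.I) := by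
      push_cast; ring
    rw [h, Complex.exp_int_mul_two_pi_mul_I]
  have key := intervalIntegral.sum_integral_adjacent_intervals
    (f := f) (μ := volume) (a := fun i : ℕ => (i : ℝ) - N) (n := 2*N)
    (fun i _ => hcont.intervalIntegrable _ _)
  have he0 : ((0:ℕ):ℝ) - N = -(N:ℝ) := by norm_num
  have he1 : ((2*N:ℕ):ℝ) - N = (N:ℝ) := by push_cast; ring
  beta_reduce at key
  rw [he0, he1] at key
  have term : ∀ i : ℕ,
      (∫ s in ((i:ℝ) - N)..(((i+1:ℕ)):ℝ) - N, f s)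
        = ∫ t in (0:ℝ)..1, (χa (Real.exp (t + ((i:ℝ) - N))) : ℂ) * Complex.exp (c * (t:ℂ)) := by
    intro i
    have hcomp := intervalIntegral.integral_comp_add_right (a := (0:ℝ)) (b := 1)
      (f := f) ((i:ℝ) - N)
    have he2 : (0:ℝ) + ((i:ℝ) - N) = (i:ℝ) - N := by ring
    have he3 : (1:ℝ) + ((i:ℝ) - N) = ((i+1:ℕ):ℝ) - N := by push_cast; ring
    rw [he2, he3] at hcomp
    rw [← hcomp]
    apply intervalIntegral.integral_congr
    intro t _
    show (χa (Real.exp (t + ((i:ℝ) - N))) : ℂ) * Complex.exp (c * ((t + ((i:ℝ) - N) : ℝ):ℂ))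
      = _
    have hd : ((i:ℝ) - N) = (((i:ℤ) - N : ℤ) : ℝ) := by push_cast; ring
    rw [show ((t + ((i:ℝ) - N) : ℝ):ℂ) = (t:ℂ) + (((i:ℝ) - N : ℝ):ℂ) by push_cast; ring,
      mul_add, Complex.exp_add, hd, hexp1, mul_one]
  simp only [term] at key
  rw [← intervalIntegral.integral_finset_sum (μ := volume) (f := fun (i : ℕ) (t : ℝ) =>
      (χa (Real.exp (t + ((i:ℝ) - N))) : ℂ) * Complex.exp (c * (t:ℂ)))
    (fun i _ => (Continuous.intervalIntegrable (by
      apply Continuous.mul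
      · apply Complex.continuous_ofReal.comp
        apply hca.comp_continuous (by continuity) (fun x => exp_pos _)
      · exact Complex.continuous_exp.comp (by continuity)) _ _))] at key
  have hpartsum : ∀ t ∈ Icc (0:ℝ) 1,
      (∑ i ∈ Finset.range (2*N), χa (Real.exp (t + ((i:ℝ) - N)))) = 1 := by
    intro t ht
    have h := hpart (Real.exp t) (exp_pos t)
    have hvan' : ∀ m : ℤ, m ∉ Finset.Icc (1 - (N:ℤ)) N →
        χa (Real.exp (-(m:ℝ)) * Real.exp t) = 0 := by
      intro m hm
      rw [← Real.exp_add]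
      apply hvan
      intro hcon
      apply hm
      rw [Finset.mem_Icc]
      constructor
      · have h2 : -(m:ℝ) + t ≤ a := hcon.2
        have h0 : (0:ℝ) ≤ t := ht.1
        have : (1:ℝ) - N ≤ (m:ℝ) := by linarith
        exact_mod_cast this
      · have h1 : -(a:ℝ) ≤ -(m:ℝ) + t := hcon.1
        have h0 : t ≤ 1 := ht.2
        have : (m:ℝ) ≤ (N:ℝ) := by linarith
        exact_mod_cast this
    clear key term hcont
    have h2 : HasSum _ _ := hasSum_sum_of_ne_finset_zero hvan'
    have h3 := h2.unique h
    rw [← h3]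
    apply Finset.sum_bij' (i := fun (i : ℕ) (_ : i ∈ Finset.range (2*N)) => (N:ℤ) - i)
      (j := fun (m : ℤ) (_ : m ∈ Finset.Icc (1 - (N:ℤ)) N) => ((N:ℤ) - m).toNat)
    · intro i hi
      rw [Finset.mem_range] at hi
      rw [Finset.mem_Icc]
      omega
    · intro m hm
      rw [Finset.mem_Icc] at hm
      rw [Finset.mem_range]
      omega
    · intro i hi
      rw [Finset.mem_range] at hi
      omega
    · intro m hm
      rw [Finset.mem_Icc] at hm
      omega
    · intro i hi
      rw [← Real.exp_add]
      congr 1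
      push_cast
      ring
  have hrw : ∀ t ∈ uIcc (0:ℝ) 1,
      (∑ i ∈ Finset.range (2*N),
        (χa (Real.exp (t + ((i:ℝ) - N))) : ℂ) * Complex.exp (c * (t:ℂ)))
        = Complex.exp (c * (t:ℂ)) := by
    intro t ht
    rw [uIcc_of_le (by norm_num)] at ht
    rw [← Finset.sum_mul]
    rw [show (∑ i ∈ Finset.range (2*N), (χa (Real.exp (t + ((i:ℝ) - N))) : ℂ))
      = ((∑ i ∈ Finset.range (2*N), χa (Real.exp (t + ((i:ℝ) - N))) : ℝ) : ℂ) by push_cast; ring]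
    rw [hpartsum t ht]
    simp
  rw [intervalIntegral.integral_congr hrw] at key
  rw [← key]
  by_cases hk : k = 0
  · subst hk
    have : c = 0 := by simp [hc]
    simp [this]
  · have hcne : c ≠ 0 := by
      simp only [hc]
      apply mul_ne_zero
      apply mul_ne_zero
      apply mul_ne_zero
      · norm_num
      · exact_mod_cast hk
      · exact_mod_cast Real.pi_ne_zero
      · exact Complex.I_ne_zero
    rw [if_neg hk, integral_exp_mul_complex hcne]
    have h1 : Complex.exp (c * ((1:ℝ):ℂ)) = 1 := by
      have := hexp1 1
      simpa using this
    simp only [Complex.ofReal_one, mul_one, Complex.ofReal_zero, mul_zero, Complex.exp_zero]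
    rw [show Complex.exp c = 1 by simpa using hexp1 1]
    simp


/-- The Kantorovich exponential sampling series
`(I_w^χ f)(x) = ∑_{k∈ℤ} χ(e^{−k} x^w) · w ∫_{k/w}^{(k+1)/w} f(e^u) du`. -/
noncomputable def kanto (χ f : ℝ → ℝ) (w x : ℝ) : ℝ :=
  ∑' k : ℤ, χ (Real.exp (-(k : ℝ)) * x ^ w) *
    (w * ∫ u in ((k : ℝ) / w)..(((k : ℝ) + 1) / w), f (Real.exp u))

/-- The absolute moment of order ν:
`M_ν(χ) = sup_{u∈ℝ⁺} ∑_{k∈ℤ} |χ(e^{−k}u)|·|k − log u|^ν`, valued in `[0,∞]`. -/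
noncomputable def absMoment (χ : ℝ → ℝ) (ν : ℝ) : ENNReal :=
  ⨆ u : {x : ℝ // 0 < x}, ∑' k : ℤ,
    ENNReal.ofReal (|χ (Real.exp (-(k : ℝ)) * u.1)| * |(k : ℝ) - Real.log u.1| ^ ν)

/-- χ : ℝ⁺ → ℝ is a kernel: (i) integrable on ℝ⁺ and bounded on [1/e, e];
(ii) ∑_{k∈ℤ} χ(e^{−k}u) = 1 for all u > 0; (iii) M_ν(χ) < ∞ for some ν > 0. -/
structure IsKernel (χ : ℝ → ℝ) : Prop where
  integrable : IntegrableOn χ (Ioi 0)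
  bounded : ∃ C, ∀ u ∈ Icc (Real.exp (-1)) (Real.exp 1), |χ u| ≤ C
  partition : ∀ u : ℝ, 0 < u → HasSum (fun k : ℤ => χ (Real.exp (-(k : ℝ)) * u)) 1
  moment : ∃ ν > 0, absMoment χ ν < ⊤

/-- `ψ_χ⁻(u) = ∑_{k > log u} χ(u e^{−k})`. -/
noncomputable def psiMinus (χ : ℝ → ℝ) (u : ℝ) : ℝ :=
  ∑' k : {k : ℤ // Real.log u < (k : ℝ)}, χ (u * Real.exp (-(k.1 : ℝ)))

/-- `ψ_χ⁺(u) = ∑_{k < log u} χ(u e^{−k})`. -/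
noncomputable def psiPlus (χ : ℝ → ℝ) (u : ℝ) : ℝ :=
  ∑' k : {k : ℤ // (k : ℝ) < Real.log u}, χ (u * Real.exp (-(k.1 : ℝ)))

/-- Construction of a kernel vanishing on `[1, e)` from two compactly-supported
continuous kernels: `χ(u) = (1−α) χ_a(u e^{−a−1}) + α χ_b(u e^b)` is a kernel,
vanishes on `[1, e)`, and satisfies the Mellin condition on `(1, ∞)`. -/
theorem kernel_construction
    (a b : ℝ) (ha : 0 < a) (hb : 0 < b) (χa χb : ℝ → ℝ)
    (hka : IsKernel χa) (hkb : IsKernel χb)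
    (hca : ContinuousOn χa (Ioi 0)) (hcb : ContinuousOn χb (Ioi 0))
    (hsa : Function.support χa ⊆ Icc (Real.exp (-a)) (Real.exp a))
    (hsb : Function.support χb ⊆ Icc (Real.exp (-b)) (Real.exp b))
    (α : ℝ) :
    IsKernel (fun u => (1 - α) * χa (u * Real.exp (-a - 1)) + α * χb (u * Real.exp b)) ∧
    (∀ u ∈ Ico (1 : ℝ) (Real.exp 1),
      (1 - α) * χa (u * Real.exp (-a - 1)) + α * χb (u * Real.exp b) = 0) ∧
    (∀ k : ℤ,
      (∫ u in Ioi (1 : ℝ),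
        (((1 - α) * χa (u * Real.exp (-a - 1)) + α * χb (u * Real.exp b) : ℝ) : ℂ)
          * Complex.exp (2 * (k : ℂ) * (Real.pi : ℂ) * Complex.I * (Real.log u : ℂ)) / (u : ℂ))
      = if k = 0 then ((1 - α : ℝ) : ℂ) else 0) := by
  obtain ⟨Ca, hCa0, hCa⟩ := global_bound (exp_pos (-a)) hca hsa
  obtain ⟨Cb, hCb0, hCb⟩ := global_bound (exp_pos (-b)) hcb hsb
  -- vanishing facts
  have hza : ∀ x, 0 < x → x ∉ Ioo (Real.exp (-a)) (Real.exp a) → χa x = 0 :=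
    vanish_outside (exp_pos _) hca hsa
  have hzb : ∀ x, 0 < x → x ∉ Ioo (Real.exp (-b)) (Real.exp b) → χb x = 0 :=
    vanish_outside (exp_pos _) hcb hsb
  have hbound : ∀ x, 0 < x →
      |(1 - α) * χa (x * Real.exp (-a - 1)) + α * χb (x * Real.exp b)| ≤
        |1 - α| * Ca + |α| * Cb := by
    intro x hx
    calc |(1 - α) * χa (x * Real.exp (-a - 1)) + α * χb (x * Real.exp b)|
        ≤ |(1 - α) * χa (x * Real.exp (-a - 1))| + |α * χb (x * Real.exp b)| := abs_add_le _ _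
      _ = |1 - α| * |χa (x * Real.exp (-a - 1))| + |α| * |χb (x * Real.exp b)| := by
          rw [abs_mul, abs_mul]
      _ ≤ |1 - α| * Ca + |α| * Cb := by
          apply add_le_add
          · exact mul_le_mul_of_nonneg_left (hCa _ (mul_pos hx (exp_pos _))) (abs_nonneg _)
          · exact mul_le_mul_of_nonneg_left (hCb _ (mul_pos hx (exp_pos _))) (abs_nonneg _)
  refine ⟨⟨?_, ?_, ?_, ?_⟩, ?_, ?_⟩
  · -- integrability
    have ia : IntegrableOn (fun u => χa (u * Real.exp (-a-1))) (Ioi 0) :=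
      integrable_of_support (div_pos (exp_pos _) (exp_pos _))
        (cont_scale (exp_pos _) hca) (support_scale (exp_pos _) hsa)
    have ib : IntegrableOn (fun u => χb (u * Real.exp b)) (Ioi 0) :=
      integrable_of_support (div_pos (exp_pos _) (exp_pos _))
        (cont_scale (exp_pos _) hcb) (support_scale (exp_pos _) hsb)
    have := (ia.const_mul (1 - α)).add (ib.const_mul α)
    exact this
  · -- boundedness
    exact ⟨|1 - α| * Ca + |α| * Cb, fun u hu =>
      hbound u (lt_of_lt_of_le (exp_pos _) hu.1)⟩
  · -- partition of unity
    intro u hu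
    have h1 := hka.partition (u * Real.exp (-a-1)) (mul_pos hu (exp_pos _))
    have h2 := hkb.partition (u * Real.exp b) (mul_pos hu (exp_pos _))
    have h3 := (h1.mul_left (1 - α)).add (h2.mul_left α)
    have h4 : (1 - α) * 1 + α * 1 = 1 := by ring
    rw [h4] at h3
    simp only [mul_assoc]
    exact h3
  · -- moment
    refine ⟨1, one_pos, ?_⟩
    set C := |1 - α| * Ca + |α| * Cb with hCdef
    have hC0 : 0 ≤ C := by positivity
    set R : ℝ := 2*a + 2*b + 1 with hRdef
    have hR0 : (0:ℝ) < R := by positivity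
    set d : ℕ := ⌈2*R⌉₊ + 1 with hddef
    set R' : ℝ := R + d + 1 with hR'def
    have hBlt : ((d:ℝ≥0∞) + 1) * ENNReal.ofReal (C * R') < ⊤ :=
      ENNReal.mul_lt_top (by simp [lt_top_iff_ne_top]) ENNReal.ofReal_lt_top
    refine lt_of_le_of_lt (iSup_le fun v => ?_) hBlt
    obtain ⟨u, hu⟩ := v
    simp only
    set m : ℤ := ⌈Real.log u - R⌉ with hmdef
    have hmlow : Real.log u - R ≤ (m:ℝ) := Int.le_ceil _
    have hmhigh : (m:ℝ) ≤ Real.log u - R + 1 := (Int.ceil_lt_add_one _).le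
    have hdR : 2*R ≤ (d:ℝ) := by
      have h1 := Nat.le_ceil (2*R)
      have h2 : ((⌈2*R⌉₊:ℕ):ℝ) ≤ (d:ℝ) := by
        rw [hddef]; push_cast; linarith
      linarith
    have hzer : ∀ k : ℤ, k ∉ Finset.Icc m (m + (d:ℤ)) →
        ENNReal.ofReal (|(1 - α) * χa (Real.exp (-(k:ℝ)) * u * Real.exp (-a - 1))
          + α * χb (Real.exp (-(k:ℝ)) * u * Real.exp b)| * |(k:ℝ) - Real.log u| ^ (1:ℝ)) = 0 := by
      intro k hk
      have hbounds : ¬ (Real.log u - R ≤ (k:ℝ) ∧ (k:ℝ) ≤ Real.log u + R) := by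
        intro hcon
        apply hk
        rw [Finset.mem_Icc]
        refine ⟨Int.ceil_le.2 hcon.1, ?_⟩
        have : (k:ℝ) ≤ (m:ℝ) + (d:ℝ) := by linarith [hcon.2]
        exact_mod_cast this
      have hXa : χa (Real.exp (-(k:ℝ)) * u * Real.exp (-a - 1)) = 0 := by
        by_contra h
        have hmem := hsa h
        have he : Real.exp (-(k:ℝ)) * u * Real.exp (-a - 1)
            = Real.exp (-(k:ℝ) + Real.log u + (-a - 1)) := by
          rw [Real.exp_add, Real.exp_add, Real.exp_log hu]
        rw [he] at hmem
        have h1 : -a ≤ -(k:ℝ) + Real.log u + (-a - 1) := exp_le_exp.1 hmem.1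
        have h2 : -(k:ℝ) + Real.log u + (-a - 1) ≤ a := exp_le_exp.1 hmem.2
        exact hbounds ⟨by linarith, by linarith⟩
      have hXb : χb (Real.exp (-(k:ℝ)) * u * Real.exp b) = 0 := by
        by_contra h
        have hmem := hsb h
        have he : Real.exp (-(k:ℝ)) * u * Real.exp b
            = Real.exp (-(k:ℝ) + Real.log u + b) := by
          rw [Real.exp_add, Real.exp_add, Real.exp_log hu]
        rw [he] at hmem
        have h1 : -b ≤ -(k:ℝ) + Real.log u + b := exp_le_exp.1 hmem.1
        have h2 : -(k:ℝ) + Real.log u + b ≤ b := exp_le_exp.1 hmem.2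
        exact hbounds ⟨by linarith, by linarith⟩
      rw [hXa, hXb]
      simp
    have hterm : ∀ k ∈ Finset.Icc m (m + (d:ℤ)),
        ENNReal.ofReal (|(1 - α) * χa (Real.exp (-(k:ℝ)) * u * Real.exp (-a - 1))
          + α * χb (Real.exp (-(k:ℝ)) * u * Real.exp b)| * |(k:ℝ) - Real.log u| ^ (1:ℝ))
          ≤ ENNReal.ofReal (C * R') := by
      intro k hk
      rw [Finset.mem_Icc] at hk
      apply ENNReal.ofReal_le_ofReal
      rw [Real.rpow_one]
      have hk1 : (m:ℝ) ≤ (k:ℝ) := by exact_mod_cast hk.1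
      have hk2 : (k:ℝ) ≤ (m:ℝ) + (d:ℝ) := by exact_mod_cast hk.2
      have habs : |(k:ℝ) - Real.log u| ≤ R' := by
        rw [abs_le]
        constructor <;> [skip; skip] <;> rw [hR'def] <;> nlinarith
      exact mul_le_mul (hbound _ (mul_pos (exp_pos _) hu)) habs (abs_nonneg _) hC0
    calc (∑' k : ℤ, ENNReal.ofReal (|(1 - α) * χa (Real.exp (-(k:ℝ)) * u * Real.exp (-a - 1))
          + α * χb (Real.exp (-(k:ℝ)) * u * Real.exp b)| * |(k:ℝ) - Real.log u| ^ (1:ℝ)))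
        = ∑ k ∈ Finset.Icc m (m + (d:ℤ)), ENNReal.ofReal
            (|(1 - α) * χa (Real.exp (-(k:ℝ)) * u * Real.exp (-a - 1))
          + α * χb (Real.exp (-(k:ℝ)) * u * Real.exp b)| * |(k:ℝ) - Real.log u| ^ (1:ℝ)) :=
          tsum_eq_sum hzer
      _ ≤ ∑ _k ∈ Finset.Icc m (m + (d:ℤ)), ENNReal.ofReal (C * R') :=
          Finset.sum_le_sum hterm
      _ = (Finset.Icc m (m + (d:ℤ))).card • ENNReal.ofReal (C * R') := by
          rw [Finset.sum_const]
      _ ≤ ((d:ℝ≥0∞) + 1) * ENNReal.ofReal (C * R') := by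
          have hcard : (Finset.Icc m (m + (d:ℤ))).card = d + 1 := by
            rw [Int.card_Icc]
            omega
          rw [hcard, nsmul_eq_mul]
          push_cast
          exact le_refl _
  · -- vanishing on [1, e)
    intro u hu
    have h1 : χa (u * Real.exp (-a - 1)) = 0 := by
      apply hza _ (mul_pos (lt_of_lt_of_le one_pos hu.1) (exp_pos _))
      intro hmem
      have : u * Real.exp (-a - 1) < Real.exp (-a) := by
        calc u * Real.exp (-a-1) < Real.exp 1 * Real.exp (-a-1) :=
          mul_lt_mul_of_pos_right hu.2 (exp_pos _)
        _ = Real.exp (-a) := by rw [← Real.exp_add]; ring_nf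
      exact absurd hmem.1 (not_lt.2 this.le)
    have h2 : χb (u * Real.exp b) = 0 := by
      apply hzb _ (mul_pos (lt_of_lt_of_le one_pos hu.1) (exp_pos _))
      intro hmem
      have : Real.exp b ≤ u * Real.exp b := le_mul_of_one_le_left (exp_pos _).le hu.1
      exact absurd hmem.2 (not_lt.2 this)
    simp [h1, h2, sub_neg_eq_add]
  · -- the Mellin condition
    intro k
    set c : ℂ := 2 * (k:ℂ) * (Real.pi:ℂ) * Complex.I with hcdef
    set N : ℕ := ⌈a⌉₊ + 2 with hNdef
    have hNa : a + 1 ≤ (N:ℝ) := by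
      have h := Nat.le_ceil a
      rw [hNdef]; push_cast; linarith
    set r : ℝ → ℝ := fun u => (1 - α) * χa (u * Real.exp (-a - 1)) with hrdef
    set H : ℝ → ℂ := fun u => (r u : ℂ) * Complex.exp (c * (Real.log u : ℂ)) / (u:ℂ) with hHdef
    have hrc : ContinuousOn r (Ioi 0) := continuousOn_const.mul (cont_scale (exp_pos _) hca)
    have hHc : ContinuousOn H (Ioi 0) := by
      apply ContinuousOn.div
      · apply ContinuousOn.mul
        · exact Complex.continuous_ofReal.comp_continuousOn hrc
        · apply Complex.continuous_exp.comp_continuousOn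
          apply ContinuousOn.mul continuousOn_const
          apply Complex.continuous_ofReal.comp_continuousOn
          exact Real.continuousOn_log.mono (fun x hx => ne_of_gt hx)
      · exact Complex.continuous_ofReal.continuousOn
      · intro x hx
        exact Complex.ofReal_ne_zero.2 (ne_of_gt hx)
    set L : ℝ := 2*a + 2 with hLdef
    set M : ℝ := Real.exp L with hMdef
    have hM1 : (1:ℝ) ≤ M := by
      rw [hMdef]
      apply Real.one_le_exp
      rw [hLdef]; linarith
    set f4 : ℝ → ℂ := fun x => ((χa (Real.exp x) : ℝ):ℂ) * Complex.exp (c * (x:ℂ)) with hf4def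
    have hf4c : Continuous f4 := by
      apply Continuous.mul
      · exact Complex.continuous_ofReal.comp
          (hca.comp_continuous continuous_exp (fun x => exp_pos x))
      · exact Complex.continuous_exp.comp (by continuity)
    have hvanf4 : ∀ x : ℝ, x ∉ Icc (-a) a → f4 x = 0 := by
      intro x hx
      have : χa (Real.exp x) = 0 := by
        by_contra h
        have h2 := hsa h
        exact hx ⟨exp_le_exp.1 h2.1, exp_le_exp.1 h2.2⟩
      simp [hf4def, this]
    -- Step A: on (1,∞) the χb part vanishes
    have stepA : (∫ u in Ioi (1:ℝ),
        (((1 - α) * χa (u * Real.exp (-a - 1)) + α * χb (u * Real.exp b) : ℝ) : ℂ)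
          * Complex.exp (c * (Real.log u : ℂ)) / (u : ℂ))
        = ∫ u in Ioi (1:ℝ), H u := by
      apply setIntegral_congr_fun measurableSet_Ioi
      intro u hu
      have h2 : χb (u * Real.exp b) = 0 := by
        by_contra h
        have hmem := hsb h
        have h3 : Real.exp b < u * Real.exp b :=
          lt_mul_of_one_lt_left (exp_pos _) hu
        exact absurd hmem.2 (not_le.2 h3)
      simp only [hHdef, hrdef, h2, mul_zero, add_zero]
    -- Step B: restrict to (1, M]
    have stepB : (∫ u in Ioi (1:ℝ), H u) = ∫ u in Ioc (1:ℝ) M, H u := by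
      apply setIntegral_eq_of_subset_of_forall_diff_eq_zero measurableSet_Ioi
        Ioc_subset_Ioi_self
      intro u hu
      obtain ⟨hu1, hu2⟩ := hu
      have huM : M < u := by
        by_contra hcon
        exact hu2 ⟨hu1, not_lt.1 hcon⟩
      have hXa : χa (u * Real.exp (-a - 1)) = 0 := by
        by_contra h
        have hmem := hsa h
        have h3 : Real.exp (a+1) < u * Real.exp (-a - 1) := by
          have h5 : M * Real.exp (-a - 1) = Real.exp (a+1) := by
            rw [hMdef, hLdef, ← Real.exp_add]
            congr 1
            ring
          rw [← h5]
          exact mul_lt_mul_of_pos_right huM (exp_pos _)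
        have h4 : Real.exp a < Real.exp (a+1) := exp_lt_exp.2 (by linarith)
        exact absurd hmem.2 (not_le.2 (lt_trans h4 h3))
      simp [hHdef, hrdef, hXa]
    -- Step C: Ioc integral as interval integral
    have stepC : (∫ u in Ioc (1:ℝ) M, H u) = ∫ u in (1:ℝ)..M, H u :=
      (intervalIntegral.integral_of_le hM1).symm
    -- Step D: substitution u = exp x
    have himg : Real.exp '' (uIcc 0 L) ⊆ Ioi 0 := by
      rintro y ⟨x, _, rfl⟩
      exact exp_pos x
    have hsub := intervalIntegral.integral_comp_smul_deriv (a := (0:ℝ)) (b := L)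
      (f := Real.exp) (f' := Real.exp) (g := H)
      (fun x _ => Real.hasDerivAt_exp x) continuous_exp.continuousOn
    have hsub' := intervalIntegral.integral_comp_smul_deriv' (a := (0:ℝ)) (b := L)
      (f := Real.exp) (f' := Real.exp) (g := H)
      (fun x _ => Real.hasDerivAt_exp x) continuous_exp.continuousOn
      (hHc.mono himg)
    rw [Real.exp_zero] at hsub'
    have hDrw : ∀ x ∈ uIcc (0:ℝ) L,
        Real.exp x • (H ∘ Real.exp) x = (r (Real.exp x) : ℂ) * Complex.exp (c * (x:ℂ)) := by
      intro x _
      show Real.exp x • H (Real.exp x) = _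
      have hne : ((Real.exp x : ℝ) : ℂ) ≠ 0 := Complex.ofReal_ne_zero.2 (exp_pos x).ne'
      rw [hHdef]
      simp only [Real.log_exp]
      rw [Complex.real_smul, mul_comm, div_mul_cancel₀ _ hne]
    rw [intervalIntegral.integral_congr hDrw] at hsub'
    have stepD : (∫ u in (1:ℝ)..M, H u)
        = ∫ x in (0:ℝ)..L, (r (Real.exp x) : ℂ) * Complex.exp (c * (x:ℂ)) := by
      rw [← hsub']
    -- Step E: shift x ↦ x + (a+1)
    have hshift := intervalIntegral.integral_comp_add_right (a := -(a+1)) (b := a+1)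
      (f := fun x => (r (Real.exp x) : ℂ) * Complex.exp (c * (x:ℂ))) (a+1)
    have he4 : -(a+1) + (a+1) = (0:ℝ) := by ring
    have he5 : (a+1) + (a+1) = L := by rw [hLdef]; ring
    rw [he4, he5] at hshift
    have hFrw : ∀ x ∈ uIcc (-(a+1)) (a+1),
        (r (Real.exp (x + (a+1))) : ℂ) * Complex.exp (c * ((x + (a+1) : ℝ):ℂ))
        = ((1-α : ℝ):ℂ) * Complex.exp (c * ((a+1 : ℝ):ℂ)) * f4 x := by
      intro x _
      have h1 : Real.exp (x + (a+1)) * Real.exp (-a - 1) = Real.exp x := by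
        rw [← Real.exp_add]; congr 1; ring
      rw [hrdef]
      simp only [h1, hf4def]
      rw [show ((x + (a+1) : ℝ):ℂ) = (x:ℂ) + ((a+1:ℝ):ℂ) by push_cast; ring,
        mul_add, Complex.exp_add]
      push_cast
      ring
    have stepE : (∫ x in (0:ℝ)..L, (r (Real.exp x) : ℂ) * Complex.exp (c * (x:ℂ)))
        = ((1-α : ℝ):ℂ) * Complex.exp (c * ((a+1 : ℝ):ℂ))
          * ∫ x in (-(a+1) : ℝ)..(a+1), f4 x := by
      rw [← hshift, intervalIntegral.integral_congr hFrw,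
        intervalIntegral.integral_const_mul]
    -- Step F: extend to [-N, N]
    have hgrow1 : (∫ x in (-(N:ℝ))..(-(a+1)), f4 x) = 0 := by
      have : ∀ x ∈ uIcc (-(N:ℝ)) (-(a+1)), f4 x = (fun _ => (0:ℂ)) x := by
        intro x hx
        rw [uIcc_of_le (by linarith)] at hx
        apply hvanf4
        intro hcon
        have := hx.2
        have := hcon.1
        linarith
      rw [intervalIntegral.integral_congr this, intervalIntegral.integral_zero]
    have hgrow2 : (∫ x in ((a+1):ℝ)..(N:ℝ), f4 x) = 0 := by
      have : ∀ x ∈ uIcc ((a+1):ℝ) (N:ℝ), f4 x = (fun _ => (0:ℂ)) x := by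
        intro x hx
        rw [uIcc_of_le (by linarith)] at hx
        apply hvanf4
        intro hcon
        have := hx.1
        have := hcon.2
        linarith
      rw [intervalIntegral.integral_congr this, intervalIntegral.integral_zero]
    have hii : ∀ p q : ℝ, IntervalIntegrable f4 volume p q :=
      fun p q => hf4c.intervalIntegrable p q
    have hadd1 := intervalIntegral.integral_add_adjacent_intervals
      (a := -(N:ℝ)) (b := -(a+1)) (c := a+1) (μ := volume) (f := f4)
      (hii _ _) (hii _ _)
    have hadd2 := intervalIntegral.integral_add_adjacent_intervals
      (a := -(N:ℝ)) (b := a+1) (c := (N:ℝ)) (μ := volume) (f := f4)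
      (hii _ _) (hii _ _)
    have stepF : (∫ x in (-(a+1) : ℝ)..(a+1), f4 x) = ∫ x in (-(N:ℝ))..(N:ℝ), f4 x := by
      rw [← hadd2, ← hadd1, hgrow1, hgrow2]
      ring
    -- the Fourier computation
    have four := fourier_unit hka.partition hca hsa k hNa
    rw [← hcdef] at four
    rw [stepA, stepB, stepC, stepD, stepE, stepF, hf4def]
    rw [four]
    rcases eq_or_ne k 0 with rfl | hk
    · have hc0 : c = 0 := by rw [hcdef]; simp
      simp [hc0]
    · simp [hk]
end

section
/- Let 1 < p ≤ 2, M > 0, and let χ: ℝ⁺ → ℝ be a function for which there exist constants 0 < C₁ ≤ C₂ such that C₁/|log u|^p ≤ χ(u) ≤ C₂/|log u|^p for all u ∈ ℝ⁺ with |log u| > M, and such that M₀(χ) < +∞. Then M_ν(χ) = +∞ for every ν with p − 1 ≤ ν ≤ 1, and M_ν(χ) < +∞ for every ν with 0 ≤ ν < p − 1. -/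
open Real MeasureTheory Filter Set

/-!
The moment sums are compared with `p`-series. For `u = 1` the terms with `k > M` are at least
`C₁ k^(ν-p)`, and `∑ k^(ν-p)` diverges when `ν - p ≥ -1`. Conversely, for any `u`, the terms with
`|k - log u|` at most `max M 1` contribute at most `(max M 1)^ν M₀(χ)`, while the others are
bounded by `C₂ |k - log u|^(ν-p)`, which is dominated, after the shift `n = k - ⌊log u⌋`, by a
multiple of the `u`-independent summable sequence `(|n| + 1)^(ν-p)`.
-/

theorem le_absMoment (χ : ℝ → ℝ) (ν : ℝ) {u : ℝ} (hu : 0 < u) :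
    ∑' k : ℤ, ENNReal.ofReal (|χ (Real.exp (-(k : ℝ)) * u)| * |(k : ℝ) - Real.log u| ^ ν) ≤
      absMoment χ ν :=
  le_iSup (fun v : {x : ℝ // 0 < x} => ∑' k : ℤ,
    ENNReal.ofReal (|χ (Real.exp (-(k : ℝ)) * v.1)| * |(k : ℝ) - Real.log v.1| ^ ν)) ⟨u, hu⟩

theorem summable_of_absMoment_ne_top {χ : ℝ → ℝ} {ν : ℝ} (h : absMoment χ ν ≠ ⊤) {u : ℝ}
    (hu : 0 < u) :
    Summable fun k : ℤ => |χ (Real.exp (-(k : ℝ)) * u)| * |(k : ℝ) - Real.log u| ^ ν := by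
  refine (ENNReal.summable_toReal (ne_top_of_le_ne_top h (le_absMoment χ ν hu))).congr
    fun k => ENNReal.toReal_ofReal (by positivity)

theorem absMoment_eq_top_of_div_rpow_le {χ : ℝ → ℝ} {p ν M C : ℝ} (hC : 0 < C) (hν : p - 1 ≤ ν)
    (hχ : ∀ u : ℝ, 0 < u → M < |Real.log u| → C / |Real.log u| ^ p ≤ χ u) :
    absMoment χ ν = ⊤ := by
  by_contra hfin
  have hterm : ∀ᶠ n : ℕ in atTop,
      ‖C * (n : ℝ) ^ (ν - p)‖ ≤ |χ (Real.exp (-(n : ℝ)))| * (n : ℝ) ^ ν := by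
    filter_upwards [eventually_gt_atTop ⌈max M 0⌉₊] with n hn
    have hMn : max M 0 < n := Nat.lt_of_ceil_lt hn
    have hn0 : (0 : ℝ) < n := lt_of_le_of_lt (le_max_right _ _) hMn
    have hlog : |Real.log (Real.exp (-(n : ℝ)))| = n := by
      rw [Real.log_exp, abs_neg, abs_of_pos hn0]
    have hχn := hχ _ (by positivity) (hlog ▸ lt_of_le_of_lt (le_max_left _ _) hMn)
    rw [hlog] at hχn
    rw [Real.norm_of_nonneg (by positivity)]
    calc C * (n : ℝ) ^ (ν - p) = C / (n : ℝ) ^ p * (n : ℝ) ^ ν := by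
          rw [Real.rpow_sub hn0]; ring
      _ ≤ |χ (Real.exp (-(n : ℝ)))| * (n : ℝ) ^ ν := by
          gcongr; exact hχn.trans (le_abs_self _)
  have hmoment := (summable_of_absMoment_ne_top hfin one_pos).comp_injective Nat.cast_injective
  have hseries := (summable_mul_left_iff hC.ne').mp
    (Summable.of_norm_bounded_eventually_nat (by simpa [Function.comp_def] using hmoment) hterm)
  exact (Real.summable_nat_rpow.mp hseries).not_ge (by linarith)

theorem summable_abs_int_add_one_rpow {q : ℝ} (hq : q < -1) :
    Summable fun n : ℤ => (|(n : ℝ)| + 1) ^ q := by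
  have h : Summable fun n : ℕ => ((n : ℝ) + 1) ^ q := by
    simpa using (summable_nat_add_iff 1).mpr (Real.summable_nat_rpow.mpr hq)
  exact .of_nat_of_neg (by simpa using h) (by simpa using h)

/-- The factor `3`: `1 ≤ |k - t|` and `|k - ⌊t⌋| ≤ |k - t| + 1` give `|k - ⌊t⌋| + 1 ≤ 3 |k - t|`. -/
theorem abs_sub_rpow_le_abs_sub_floor {q : ℝ} (hq : q ≤ 0) {k : ℤ} {t : ℝ}
    (h : 1 ≤ |(k : ℝ) - t|) :
    |(k : ℝ) - t| ^ q ≤ 3 ^ (-q) * (|((k - ⌊t⌋ : ℤ) : ℝ)| + 1) ^ q := by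
  have hfloor : |((k - ⌊t⌋ : ℤ) : ℝ)| ≤ |(k : ℝ) - t| + 1 := by
    push_cast
    calc |(k : ℝ) - ⌊t⌋| ≤ |(k : ℝ) - t| + |t - ⌊t⌋| := abs_sub_le _ _ _
      _ ≤ |(k : ℝ) - t| + 1 := by
        rw [abs_of_nonneg (sub_nonneg.2 (Int.floor_le t))]
        linarith [Int.lt_floor_add_one t]
  calc |(k : ℝ) - t| ^ q ≤ ((|((k - ⌊t⌋ : ℤ) : ℝ)| + 1) / 3) ^ q :=
        Real.rpow_le_rpow_of_nonpos (by positivity) (by linarith) hq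
    _ = 3 ^ (-q) * (|((k - ⌊t⌋ : ℤ) : ℝ)| + 1) ^ q := by
        rw [Real.div_rpow (by positivity) (by norm_num), Real.rpow_neg (by norm_num)]; ring

theorem absMoment_term_le {χ : ℝ → ℝ} {p ν M C : ℝ} (hν₀ : 0 ≤ ν) (hν : ν ≤ p)
    (hχ : ∀ u : ℝ, 0 < u → M < |Real.log u| → |χ u| ≤ C / |Real.log u| ^ p)
    {u : ℝ} (hu : 0 < u) (k : ℤ) :
    ENNReal.ofReal (|χ (Real.exp (-(k : ℝ)) * u)| * |(k : ℝ) - Real.log u| ^ ν) ≤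
      ENNReal.ofReal (max M 1 ^ ν) * ENNReal.ofReal |χ (Real.exp (-(k : ℝ)) * u)| +
        ENNReal.ofReal
          (C * (3 ^ (-(ν - p)) * (|((k - ⌊Real.log u⌋ : ℤ) : ℝ)| + 1) ^ (ν - p))) := by
  set d := |(k : ℝ) - Real.log u|
  rcases le_or_gt d (max M 1) with hnear | hfar
  · refine le_add_right ?_
    rw [← ENNReal.ofReal_mul (by positivity), mul_comm]
    gcongr
  · refine le_add_left (ENNReal.ofReal_le_ofReal ?_)
    have hd : 1 < d := (le_max_right M 1).trans_lt hfar
    have hlog : |Real.log (Real.exp (-(k : ℝ)) * u)| = d := by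
      rw [Real.log_mul (Real.exp_ne_zero _) hu.ne', Real.log_exp, neg_add_eq_sub, abs_sub_comm]
    have hχk := hχ _ (by positivity) (hlog ▸ (le_max_left M 1).trans_lt hfar)
    rw [hlog] at hχk
    have hC : 0 ≤ C := by
      have := (abs_nonneg _).trans hχk
      rwa [le_div_iff₀ (by positivity), zero_mul] at this
    calc |χ (Real.exp (-(k : ℝ)) * u)| * d ^ ν ≤ C / d ^ p * d ^ ν := by gcongr
      _ = C * d ^ (ν - p) := by rw [Real.rpow_sub (by linarith)]; ring
      _ ≤ _ := mul_le_mul_of_nonneg_left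
          (abs_sub_rpow_le_abs_sub_floor (by linarith) hd.le) hC

theorem absMoment_lt_top_of_abs_le_div_rpow {χ : ℝ → ℝ} {p ν M C : ℝ} (hν₀ : 0 ≤ ν)
    (hν : ν < p - 1) (hχ : ∀ u : ℝ, 0 < u → M < |Real.log u| → |χ u| ≤ C / |Real.log u| ^ p)
    (h₀ : absMoment χ 0 < ⊤) :
    absMoment χ ν < ⊤ := by
  set g : ℤ → ℝ := fun n => C * (3 ^ (-(ν - p)) * (|(n : ℝ)| + 1) ^ (ν - p))
  have hg : ∑' n, ENNReal.ofReal (g n) < ⊤ :=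
    ((summable_abs_int_add_one_rpow (q := ν - p) (by linarith)).mul_left _).mul_left _
      |>.tsum_ofReal_lt_top
  suffices absMoment χ ν ≤
      ENNReal.ofReal (max M 1 ^ ν) * absMoment χ 0 + ∑' n, ENNReal.ofReal (g n) from
    this.trans_lt (ENNReal.add_lt_top.mpr ⟨ENNReal.mul_lt_top ENNReal.ofReal_lt_top h₀, hg⟩)
  refine iSup_le fun ⟨u, hu⟩ => ?_
  calc _ ≤ _ := ENNReal.tsum_le_tsum (absMoment_term_le hν₀ (by linarith) hχ hu)
    _ = ENNReal.ofReal (max M 1 ^ ν) * ∑' k : ℤ, ENNReal.ofReal |χ (Real.exp (-(k : ℝ)) * u)| +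
          ∑' n, ENNReal.ofReal (g n) := by
        rw [ENNReal.tsum_add, ENNReal.tsum_mul_left]
        congr 1
        exact (Equiv.subRight ⌊Real.log u⌋).tsum_eq fun n => ENNReal.ofReal (g n)
    _ ≤ ENNReal.ofReal (max M 1 ^ ν) * absMoment χ 0 + ∑' n, ENNReal.ofReal (g n) := by
        gcongr
        simpa using le_absMoment χ 0 hu

theorem absMoment_finiteness_dichotomy_general
    (p M : ℝ)
    (χ : ℝ → ℝ) (C₁ C₂ : ℝ) (hC₁ : 0 < C₁)
    (hbound : ∀ u : ℝ, 0 < u → M < |Real.log u| →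
      C₁ / |Real.log u| ^ p ≤ χ u ∧ χ u ≤ C₂ / |Real.log u| ^ p)
    (hM0 : absMoment χ 0 < ⊤) :
    (∀ ν : ℝ, p - 1 ≤ ν → ν ≤ 1 → absMoment χ ν = ⊤) ∧
    (∀ ν : ℝ, 0 ≤ ν → ν < p - 1 → absMoment χ ν < ⊤) := by
  refine ⟨fun ν hν _ => absMoment_eq_top_of_div_rpow_le hC₁ hν fun u hu hMu => (hbound u hu hMu).1,
    fun ν hν₀ hν => absMoment_lt_top_of_abs_le_div_rpow (M := M) (C := C₂) hν₀ hν (fun u hu hMu => ?_) hM0⟩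
  obtain ⟨hlower, hupper⟩ := hbound u hu hMu
  rwa [abs_of_nonneg ((by positivity : 0 ≤ C₁ / |Real.log u| ^ p).trans hlower)]

/-- If `C₁/|log u|^p ≤ χ(u) ≤ C₂/|log u|^p` for `|log u| > M` with `1 < p ≤ 2`, and
`M₀(χ) < ∞`, then `M_ν(χ) = ∞` for `p − 1 ≤ ν ≤ 1` and `M_ν(χ) < ∞` for `0 ≤ ν < p − 1`. -/
theorem absMoment_finiteness_dichotomy
    (p M : ℝ) (hp1 : 1 < p) (hp2 : p ≤ 2) (hM : 0 < M)
    (χ : ℝ → ℝ) (C₁ C₂ : ℝ) (hC₁ : 0 < C₁) (hC₁₂ : C₁ ≤ C₂)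
    (hbound : ∀ u : ℝ, 0 < u → M < |Real.log u| →
      C₁ / |Real.log u| ^ p ≤ χ u ∧ χ u ≤ C₂ / |Real.log u| ^ p)
    (hM0 : absMoment χ 0 < ⊤) :
    (∀ ν : ℝ, p - 1 ≤ ν → ν ≤ 1 → absMoment χ ν = ⊤) ∧
    (∀ ν : ℝ, 0 ≤ ν → ν < p - 1 → absMoment χ ν < ⊤) :=
  absMoment_finiteness_dichotomy_general p M χ C₁ C₂ hC₁ hbound hM0
end
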